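/- arXiv:2603.19911 — 5 statements merged into one kernel-verified Lean document; each statement's English description precedes it below -/
import Mathlib

section
/- Let P be a positive definite complex d×d matrix and let J and K be positive definite complex matrices indexed by ((Fin d) × (Fin d')) × ((Fin d) × (Fin d')). Then D̂((P^{1/2} ⊗ I) J (P^{1/2} ⊗ I) ‖ (P^{1/2} ⊗ I) K (P^{1/2} ⊗ I)) = Re Tr[(P ⊗ I) · D_op(J‖K)], where I is the d'×d' identity matrix. -/
open Matrix Kronecker
open scoped ComplexOrder

noncomputable section

/-- Apply a real function to a complex matrix via the spectral decomposition
(meaningful for Hermitian matrices; defined as `0` otherwise). -/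
def matFun {n : Type*} [Fintype n] [DecidableEq n]
    (f : ℝ → ℝ) (A : Matrix n n ℂ) : Matrix n n ℂ :=
  if hA : A.IsHermitian then
    (hA.eigenvectorUnitary : Matrix n n ℂ) *
      Matrix.diagonal (fun i => (f (hA.eigenvalues i) : ℂ)) *
      (hA.eigenvectorUnitary : Matrix n n ℂ)ᴴ
  else 0

/-- Real power of a matrix (via the spectral decomposition). -/
def mpow {n : Type*} [Fintype n] [DecidableEq n] (A : Matrix n n ℂ) (t : ℝ) :
    Matrix n n ℂ :=
  matFun (fun x => x ^ t) A

/-- Logarithm of a matrix (via the spectral decomposition). -/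
def mlog {n : Type*} [Fintype n] [DecidableEq n] (A : Matrix n n ℂ) : Matrix n n ℂ :=
  matFun Real.log A

/-- The operator relative entropy `D_op(X‖Y) = X^{1/2} log(X^{1/2} Y⁻¹ X^{1/2}) X^{1/2}`. -/
def Dop {n : Type*} [Fintype n] [DecidableEq n] (X Y : Matrix n n ℂ) : Matrix n n ℂ :=
  mpow X (1/2) * mlog (mpow X (1/2) * Y⁻¹ * mpow X (1/2)) * mpow X (1/2)

/-- The Belavkin--Staszewski relative entropy `D̂(ρ‖σ) = Re Tr[D_op(ρ‖σ)]`. -/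
def BSEntropy {n : Type*} [Fintype n] [DecidableEq n] (ρ σ : Matrix n n ℂ) : ℝ :=
  (Dop ρ σ).trace.re

/-- The weighted matrix geometric mean `G_t(X,Y) = X^{1/2} (X^{-1/2} Y X^{-1/2})^t X^{1/2}`. -/
def geoMean {n : Type*} [Fintype n] [DecidableEq n] (t : ℝ) (X Y : Matrix n n ℂ) :
    Matrix n n ℂ :=
  mpow X (1/2) * mpow (mpow X (-(1/2)) * Y * mpow X (-(1/2))) t * mpow X (1/2)

/-- Partial trace over the second (B) factor. -/
def ptraceB {R B : Type*} [Fintype B] (M : Matrix (R × B) (R × B) ℂ) : Matrix R R ℂ :=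
  Matrix.of fun r r' => ∑ b, M (r, b) (r', b)

/-- Partial trace over the first (R) factor. -/
def ptraceR {R A : Type*} [Fintype R] (M : Matrix (R × A) (R × A) ℂ) : Matrix A A ℂ :=
  Matrix.of fun a a' => ∑ r, M (r, a) (r, a')

/-- The map associated to a Choi matrix `J` (indexed by `(A × B) × (A × B)`), applied to a
matrix indexed by `(R × A) × (R × A)`. -/
def choiMap {R A B : Type*} [Fintype A] (J : Matrix (A × B) (A × B) ℂ)
    (X : Matrix (R × A) (R × A) ℂ) : Matrix (R × B) (R × B) ℂ :=
  Matrix.of fun p q => ∑ a, ∑ a', X (p.1, a) (q.1, a') * J (a, p.2) (a', q.2)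


/-!
`D_op` transforms covariantly under congruence: `D_op(Cᴴ X C ‖ Cᴴ Y C) = Cᴴ D_op(X ‖ Y) C` for
invertible `C`. With `R = (Cᴴ X C)^{1/2}` and `S = X^{1/2}`, the polar factor `U = S C R⁻¹` is
unitary, `R = U* S C = Cᴴ S U`, and hence `R (Cᴴ Y C)⁻¹ R = U* (S Y⁻¹ S) U`; the logarithm
commutes with this unitary conjugation. Taking `C = P^{1/2} ⊗ I` and cycling the trace gives
the theorem.
-/

section MatrixFunctions

variable {n : Type*} [Fintype n] [DecidableEq n]

theorem matFun_eq_cfc (f : ℝ → ℝ) {A : Matrix n n ℂ} (hA : A.IsHermitian) :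
    matFun f A = cfc f A := by
  rw [matFun, dif_pos hA, hA.cfc_eq, Matrix.IsHermitian.cfc]
  rfl

theorem isHermitian_matFun (f : ℝ → ℝ) (A : Matrix n n ℂ) : (matFun f A).IsHermitian := by
  by_cases hA : A.IsHermitian
  · rw [matFun_eq_cfc f hA]
    exact cfc_predicate f A
  · rw [matFun, dif_neg hA]
    exact isHermitian_zero

theorem isHermitian_mpow (A : Matrix n n ℂ) (t : ℝ) : (mpow A t).IsHermitian :=
  isHermitian_matFun _ A

theorem matFun_star_mul_mul (f : ℝ → ℝ) {A U : Matrix n n ℂ} (hA : A.IsHermitian)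
    (hU : U ∈ unitaryGroup n ℂ) :
    matFun f (star U * A * U) = star U * matFun f A * U := by
  have hUA : (star U * A * U).IsHermitian := by
    simpa [star_eq_conjTranspose] using isHermitian_conjTranspose_mul_mul U hA
  set φ := Unitary.conjStarAlgAut ℂ _ (star (⟨U, hU⟩ : unitaryGroup n ℂ))
  have hφ : ⇑φ = fun X => star U * X * U := funext (Unitary.conjStarAlgAut_star_apply _)
  have hconj := StarAlgHomClass.map_cfc (S := ℂ) φ f A
    (Matrix.finite_real_spectrum.continuousOn f) (by rw [hφ]; fun_prop) hA (by rwa [hφ])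
  simp only [hφ] at hconj
  rw [matFun_eq_cfc f hA, matFun_eq_cfc f hUA, hconj]

open scoped MatrixOrder in
theorem mpow_half_mul_self {A : Matrix n n ℂ} (hA : A.PosSemidef) :
    mpow A (1/2) * mpow A (1/2) = A := by
  have hAsa : IsSelfAdjoint A := hA.1
  rw [mpow, matFun_eq_cfc _ hA.1, ← cfc_mul _ _ A (Matrix.finite_real_spectrum.continuousOn _)
    (Matrix.finite_real_spectrum.continuousOn _)]
  conv_rhs => rw [← cfc_id' ℝ A]
  refine cfc_congr fun x hx => ?_
  rw [← Real.sqrt_eq_rpow, Real.mul_self_sqrt]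
  exact spectrum_nonneg_of_nonneg hA.nonneg hx

end MatrixFunctions

section RelativeEntropy

variable {n : Type*} [Fintype n] [DecidableEq n]

theorem mul_nonsing_inv_mem_unitaryGroup {B R : Matrix n n ℂ} (hRH : Rᴴ = R)
    (hR : IsUnit R.det) (hRR : R * R = Bᴴ * B) : B * R⁻¹ ∈ unitaryGroup n ℂ := by
  rw [mem_unitaryGroup_iff', star_eq_conjTranspose, conjTranspose_mul, conjTranspose_nonsing_inv,
    hRH, Matrix.mul_assoc, ← Matrix.mul_assoc Bᴴ, ← hRR, mul_nonsing_inv_cancel_right R R hR,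
    nonsing_inv_mul R hR]

theorem exists_mem_unitaryGroup_polar {R S C : Matrix n n ℂ} (hRH : Rᴴ = R) (hSH : Sᴴ = S)
    (hR : IsUnit R.det) (hRR : R * R = Cᴴ * (S * S) * C) :
    ∃ U ∈ unitaryGroup n ℂ, star U * S * C = R ∧ Cᴴ * S * U = R := by
  set U := S * C * R⁻¹
  have hU : U ∈ unitaryGroup n ℂ := mul_nonsing_inv_mem_unitaryGroup hRH hR (by
    rw [conjTranspose_mul, hSH, hRR]
    simp only [Matrix.mul_assoc])
  have hUR : U * R = S * C := nonsing_inv_mul_cancel_right R (S * C) hR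
  clear_value U
  have hR_left : star U * S * C = R := by
    rw [Matrix.mul_assoc, ← hUR, ← Matrix.mul_assoc, UnitaryGroup.star_mul_self ⟨U, hU⟩,
      Matrix.one_mul]
  refine ⟨U, hU, hR_left, ?_⟩
  rw [← hRH, ← hR_left, ← hSH]
  simp only [conjTranspose_mul, star_eq_conjTranspose, conjTranspose_conjTranspose, hSH,
    Matrix.mul_assoc]

theorem Dop_conjTranspose_mul_mul {X Y C : Matrix n n ℂ} (hX : X.PosDef) (hY : Y.IsHermitian)
    (hC : IsUnit C) : Dop (Cᴴ * X * C) (Cᴴ * Y * C) = Cᴴ * Dop X Y * C := by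
  have hA : (Cᴴ * X * C).PosDef :=
    hX.conjTranspose_mul_mul_same (Matrix.mulVec_injective_iff_isUnit.2 hC)
  rw [Dop, Dop]
  set R := mpow (Cᴴ * X * C) (1/2)
  set S := mpow X (1/2)
  have hRR : R * R = Cᴴ * X * C := mpow_half_mul_self hA.posSemidef
  have hSS : S * S = X := mpow_half_mul_self hX.posSemidef
  have hRH : Rᴴ = R := isHermitian_mpow _ _
  have hSH : Sᴴ = S := isHermitian_mpow _ _
  clear_value R S
  have hR : IsUnit R.det :=
    (isUnit_iff_isUnit_det R).1 (isUnit_of_mul_isUnit_right (hRR ▸ hA.isUnit))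
  obtain ⟨U, hU, hR_left, hR_right⟩ :=
    exists_mem_unitaryGroup_polar hRH hSH hR (by rw [hSS, hRR])
  have hCdet : IsUnit C.det := (isUnit_iff_isUnit_det C).1 hC
  have hCHdet : IsUnit Cᴴ.det := by rwa [det_conjTranspose, isUnit_star]
  have hconj : R * (Cᴴ * Y * C)⁻¹ * R = star U * (S * Y⁻¹ * S) * U :=
    calc R * (Cᴴ * Y * C)⁻¹ * R = star U * S * (C * C⁻¹) * Y⁻¹ * (Cᴴ⁻¹ * Cᴴ) * S * U := by
          nth_rw 1 [← hR_left]
          rw [← hR_right]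
          simp only [Matrix.mul_inv_rev, Matrix.mul_assoc]
      _ = star U * (S * Y⁻¹ * S) * U := by
          simp only [mul_nonsing_inv C hCdet, nonsing_inv_mul _ hCHdet, Matrix.mul_one,
            Matrix.mul_assoc]
  have hSYS : (S * Y⁻¹ * S).IsHermitian := by
    simpa [hSH] using isHermitian_conjTranspose_mul_mul S hY.inv
  have hUU : U * star U = 1 := mem_unitaryGroup_iff.1 hU
  rw [hconj, mlog, mlog, matFun_star_mul_mul _ hSYS hU]
  nth_rw 1 [← hR_right]
  rw [← hR_left]
  simp only [Matrix.mul_assoc]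
  rw [← Matrix.mul_assoc U, hUU, Matrix.one_mul, ← Matrix.mul_assoc U, hUU, Matrix.one_mul]

theorem BSEntropy_conjTranspose_mul_mul {X Y C : Matrix n n ℂ} (hX : X.PosDef)
    (hY : Y.IsHermitian) (hC : IsUnit C) :
    BSEntropy (Cᴴ * X * C) (Cᴴ * Y * C) = (C * Cᴴ * Dop X Y).trace.re := by
  rw [BSEntropy, Dop_conjTranspose_mul_mul hX hY hC, trace_mul_cycle]

end RelativeEntropy

/-- For positive definite `P` and positive definite `J`, `K` on the bipartite
space, `D̂((P^{1/2} ⊗ I) J (P^{1/2} ⊗ I) ‖ (P^{1/2} ⊗ I) K (P^{1/2} ⊗ I))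
  = Re Tr[(P ⊗ I) · D_op(J‖K)]`. -/
theorem bs_entropy_sandwich_eq_trace {d d' : ℕ}
    (P : Matrix (Fin d) (Fin d) ℂ) (hP : P.PosDef)
    (J K : Matrix ((Fin d) × (Fin d')) ((Fin d) × (Fin d')) ℂ)
    (hJ : J.PosDef) (hK : K.PosDef) :
    BSEntropy
      ((mpow P (1/2) ⊗ₖ (1 : Matrix (Fin d') (Fin d') ℂ)) * J *
        (mpow P (1/2) ⊗ₖ (1 : Matrix (Fin d') (Fin d') ℂ)))
      ((mpow P (1/2) ⊗ₖ (1 : Matrix (Fin d') (Fin d') ℂ)) * K *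
        (mpow P (1/2) ⊗ₖ (1 : Matrix (Fin d') (Fin d') ℂ)))
      = ((P ⊗ₖ (1 : Matrix (Fin d') (Fin d') ℂ)) * Dop J K).trace.re := by
  set Q := mpow P (1/2) ⊗ₖ (1 : Matrix (Fin d') (Fin d') ℂ)
  have hQQ : Q * Q = P ⊗ₖ 1 := by
    rw [← mul_kronecker_mul, Matrix.one_mul, mpow_half_mul_self hP.posSemidef]
  have hQH : Qᴴ = Q := by
    rw [conjTranspose_kronecker, (isHermitian_mpow P _).eq, conjTranspose_one]
  have hQ : IsUnit Q :=
    isUnit_of_mul_isUnit_right (hQQ ▸ Matrix.IsUnit.kronecker hP.isUnit isUnit_one)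
  have h := BSEntropy_conjTranspose_mul_mul hJ hK.1 hQ
  rwa [hQH, hQQ] at h
end
end

section
/- Let P be a positive definite complex d×d matrix, let J and K be positive definite complex matrices indexed by ((Fin d) × (Fin d')) × ((Fin d) × (Fin d')), and let t ∈ ℝ. Then Tr[G_t((P^{1/2} ⊗ I) J (P^{1/2} ⊗ I), (P^{1/2} ⊗ I) K (P^{1/2} ⊗ I))] = Tr[(P ⊗ I) · G_t(J,K)] = Tr[P · Tr_B(G_t(J,K))], where I is the d'×d' identity matrix. -/
/-! The weighted geometric mean is covariant under congruence: for invertible `M`,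
`G_t(Mᴴ J M, Mᴴ K M) = Mᴴ G_t(J, K) M`. Indeed, with `X = Mᴴ J M`, the matrix
`U = X^{-1/2} Mᴴ J^{1/2}` is unitary (since `U Uᴴ = X^{-1/2} X X^{-1/2}`) and
`X^{-1/2} Mᴴ K M X^{-1/2} = U (J^{-1/2} K J^{-1/2}) Uᴴ`; the functional calculus commutes
with unitary conjugation, and `X^{1/2} U = Mᴴ J^{1/2}`. For `M = P^{1/2} ⊗ I`, which is
Hermitian with `M² = P ⊗ I`, cyclicity of the trace gives the first identity; the second is
the defining property of the partial trace. -/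

open Matrix Kronecker
open scoped ComplexOrder

noncomputable section

namespace Matrix

variable {n : Type*} [Fintype n] [DecidableEq n]

lemma mpow_eq_cfc {A : Matrix n n ℂ} (hA : A.IsHermitian) (t : ℝ) :
    mpow A t = cfc (fun x : ℝ => x ^ t) A := by
  rw [mpow, matFun, dif_pos hA, hA.cfc_eq]
  rfl

lemma IsHermitian.mpow {A : Matrix n n ℂ} (hA : A.IsHermitian) (t : ℝ) :
    (mpow A t).IsHermitian := by
  rw [mpow_eq_cfc hA]
  exact cfc_predicate _ A

lemma PosDef.mpow_mul_mpow {A : Matrix n n ℂ} (hA : A.PosDef) (s r : ℝ) :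
    mpow A s * mpow A r = mpow A (s + r) := by
  have hpos : ∀ x ∈ spectrum ℝ A, 0 < x := by
    rw [hA.isHermitian.spectrum_real_eq_range_eigenvalues]
    rintro x ⟨i, rfl⟩
    exact hA.eigenvalues_pos i
  simp only [mpow_eq_cfc hA.isHermitian]
  rw [← cfc_mul _ _ A (A.finite_real_spectrum.continuousOn _)
    (A.finite_real_spectrum.continuousOn _)]
  exact cfc_congr fun x hx => (Real.rpow_add (hpos x hx) s r).symm

lemma PosDef.mpow_mul_mpow_neg {A : Matrix n n ℂ} (hA : A.PosDef) (s : ℝ) :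
    mpow A s * mpow A (-s) = 1 := by
  rw [hA.mpow_mul_mpow, add_neg_cancel, mpow_eq_cfc hA.isHermitian]
  exact (cfc_congr fun x _ => Real.rpow_zero x).trans (cfc_const_one ℝ A hA.isHermitian)

lemma PosDef.mpow_neg_mul_mpow {A : Matrix n n ℂ} (hA : A.PosDef) (s : ℝ) :
    mpow A (-s) * mpow A s = 1 := by
  simpa using hA.mpow_mul_mpow_neg (-s)

lemma PosDef.mpow_half_mul_mpow_half {A : Matrix n n ℂ} (hA : A.PosDef) :
    mpow A (1 / 2) * mpow A (1 / 2) = A := by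
  rw [hA.mpow_mul_mpow, add_halves, mpow_eq_cfc hA.isHermitian]
  exact (cfc_congr fun x _ => Real.rpow_one x).trans (cfc_id' ℝ A hA.isHermitian)

lemma mpow_unitary_mul_mul_star {A : Matrix n n ℂ} (hA : A.IsHermitian)
    (U : unitaryGroup n ℂ) (t : ℝ) :
    mpow ((U : Matrix n n ℂ) * A * star (U : Matrix n n ℂ)) t =
      U * mpow A t * star (U : Matrix n n ℂ) := by
  have hUA : ((U : Matrix n n ℂ) * A * star (U : Matrix n n ℂ)).IsHermitian :=
    isHermitian_mul_mul_conjTranspose _ hA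
  rw [mpow_eq_cfc hUA, mpow_eq_cfc hA]
  exact (StarAlgHomClass.map_cfc (S := ℂ) (Unitary.conjStarAlgAut ℂ _ U) _ A
    (A.finite_real_spectrum.continuousOn _)
    (LinearMap.continuous_of_finiteDimensional
      (Unitary.conjStarAlgAut ℂ (Matrix n n ℂ) U).toAlgEquiv.toLinearMap) hA hUA).symm

lemma PosDef.mpow_neg_half_mul_conjTranspose_mul_mpow_half_mem_unitaryGroup {J M : Matrix n n ℂ}
    (hJ : J.PosDef) (hX : (Mᴴ * J * M).PosDef) :
    mpow (Mᴴ * J * M) (-(1 / 2)) * Mᴴ * mpow J (1 / 2) ∈ unitaryGroup n ℂ := by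
  have hSm := (hX.isHermitian.mpow (-(1 / 2))).eq
  have hJh := (hJ.isHermitian.mpow (1 / 2)).eq
  have hSS := hX.mpow_half_mul_mpow_half
  have hJhJh := hJ.mpow_half_mul_mpow_half
  have hSSm := hX.mpow_mul_mpow_neg (1 / 2)
  have hSmS := hX.mpow_neg_mul_mpow (1 / 2)
  rw [mem_unitaryGroup_iff, star_eq_conjTranspose]
  -- Opaque powers keep `noncomm_ring` and `rw` from unfolding the functional calculus.
  generalize mpow (Mᴴ * J * M) (1 / 2) = S at *
  generalize mpow (Mᴴ * J * M) (-(1 / 2)) = Sm at *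
  generalize mpow J (1 / 2) = Jh at *
  calc Sm * Mᴴ * Jh * (Sm * Mᴴ * Jh)ᴴ = Sm * (Mᴴ * (Jh * Jh) * M) * Sm := by
        simp only [conjTranspose_mul, conjTranspose_conjTranspose, hSm, hJh, mul_assoc]
    _ = (Sm * S) * (S * Sm) := by rw [hJhJh, ← hSS]; noncomm_ring
    _ = 1 := by rw [hSmS, hSSm, one_mul]

lemma geoMean_conjTranspose_mul_mul {J K M : Matrix n n ℂ} (hJ : J.PosDef) (hK : K.IsHermitian)
    (hM : IsUnit M) (t : ℝ) :
    geoMean t (Mᴴ * J * M) (Mᴴ * K * M) = Mᴴ * geoMean t J K * M := by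
  have hX : (Mᴴ * J * M).PosDef :=
    hJ.conjTranspose_mul_mul_same (mulVec_injective_iff_isUnit.mpr hM)
  have hJmKJm : (mpow J (-(1 / 2)) * K * mpow J (-(1 / 2))).IsHermitian := by
    have := isHermitian_conjTranspose_mul_mul (mpow J (-(1 / 2))) hK
    rwa [(hJ.isHermitian.mpow _).eq] at this
  have hUmem := hJ.mpow_neg_half_mul_conjTranspose_mul_mpow_half_mem_unitaryGroup hX
  have hSm := (hX.isHermitian.mpow (-(1 / 2))).eq
  have hJh := (hJ.isHermitian.mpow (1 / 2)).eq
  have hSSm := hX.mpow_mul_mpow_neg (1 / 2)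
  have hSmS := hX.mpow_neg_mul_mpow (1 / 2)
  have hJhJm := hJ.mpow_mul_mpow_neg (1 / 2)
  have hJmJh := hJ.mpow_neg_mul_mpow (1 / 2)
  rw [geoMean, geoMean]
  generalize mpow (Mᴴ * J * M) (1 / 2) = S at *
  generalize mpow (Mᴴ * J * M) (-(1 / 2)) = Sm at *
  generalize mpow J (1 / 2) = Jh at *
  generalize mpow J (-(1 / 2)) = Jm at *
  let U : unitaryGroup n ℂ := ⟨Sm * Mᴴ * Jh, hUmem⟩
  have hU : (U : Matrix n n ℂ) = Sm * Mᴴ * Jh := rfl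
  have hstarU : star (U : Matrix n n ℂ) = Jh * M * Sm := by
    simp only [hU, star_eq_conjTranspose, conjTranspose_mul, conjTranspose_conjTranspose, hSm, hJh,
      mul_assoc]
  have hwhiten : Sm * (Mᴴ * K * M) * Sm = U * (Jm * K * Jm) * star (U : Matrix n n ℂ) := by
    calc Sm * (Mᴴ * K * M) * Sm = Sm * Mᴴ * ((Jh * Jm) * K * (Jm * Jh)) * M * Sm := by
          rw [hJhJm, hJmJh]; noncomm_ring
      _ = U * (Jm * K * Jm) * star (U : Matrix n n ℂ) := by rw [hstarU, hU]; noncomm_ring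
  calc S * mpow (Sm * (Mᴴ * K * M) * Sm) t * S
      = (S * Sm) * Mᴴ * Jh * mpow (Jm * K * Jm) t * Jh * M * (Sm * S) := by
        rw [hwhiten, mpow_unitary_mul_mul_star hJmKJm, hstarU, hU]; noncomm_ring
    _ = Mᴴ * (Jh * mpow (Jm * K * Jm) t * Jh) * M := by
        rw [hSSm, hSmS]; noncomm_ring

lemma trace_kronecker_one_mul {R B : Type*} [Fintype R] [Fintype B] [DecidableEq B]
    (P : Matrix R R ℂ) (G : Matrix (R × B) (R × B) ℂ) :
    ((P ⊗ₖ (1 : Matrix B B ℂ)) * G).trace = (P * ptraceB G).trace := by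
  simp only [trace, diag, mul_apply, ptraceB, of_apply, kroneckerMap_apply, Fintype.sum_prod_type,
    one_apply, mul_ite, mul_one, mul_zero, ite_mul, zero_mul, Finset.sum_ite_eq,
    Finset.mem_univ, if_true, Finset.mul_sum]
  exact Finset.sum_congr rfl fun r _ => Finset.sum_comm

end Matrix

/-- For positive definite `P` and positive definite bipartite `J`, `K`, and `t ∈ ℝ`,
`Tr[G_t((P^{1/2} ⊗ I) J (P^{1/2} ⊗ I), (P^{1/2} ⊗ I) K (P^{1/2} ⊗ I))]
  = Tr[(P ⊗ I) · G_t(J,K)] = Tr[P · Tr_B(G_t(J,K))]`. -/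
theorem trace_geoMean_sandwich_eq {d d' : ℕ}
    (P : Matrix (Fin d) (Fin d) ℂ) (hP : P.PosDef)
    (J K : Matrix ((Fin d) × (Fin d')) ((Fin d) × (Fin d')) ℂ)
    (hJ : J.PosDef) (hK : K.PosDef) (t : ℝ) :
    (geoMean t
        ((mpow P (1/2) ⊗ₖ (1 : Matrix (Fin d') (Fin d') ℂ)) * J *
          (mpow P (1/2) ⊗ₖ (1 : Matrix (Fin d') (Fin d') ℂ)))
        ((mpow P (1/2) ⊗ₖ (1 : Matrix (Fin d') (Fin d') ℂ)) * K *
          (mpow P (1/2) ⊗ₖ (1 : Matrix (Fin d') (Fin d') ℂ)))).trace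
      = ((P ⊗ₖ (1 : Matrix (Fin d') (Fin d') ℂ)) * geoMean t J K).trace
    ∧ ((P ⊗ₖ (1 : Matrix (Fin d') (Fin d') ℂ)) * geoMean t J K).trace
      = (P * ptraceB (geoMean t J K)).trace := by
  set M := mpow P (1/2) ⊗ₖ (1 : Matrix (Fin d') (Fin d') ℂ)
  have hMself : Mᴴ = M := by
    rw [conjTranspose_kronecker, (hP.isHermitian.mpow _).eq, conjTranspose_one]
  have hMunit : IsUnit M := IsUnit.of_mul_eq_one (mpow P (-(1 / 2)) ⊗ₖ 1) <| by
    rw [← mul_kronecker_mul, hP.mpow_mul_mpow_neg, one_mul, one_kronecker_one]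
  have hMM : M * M = P ⊗ₖ 1 := by
    rw [← mul_kronecker_mul, hP.mpow_half_mul_mpow_half, one_mul]
  have hconj := geoMean_conjTranspose_mul_mul hJ hK.isHermitian hMunit t
  rw [hMself] at hconj
  refine ⟨?_, trace_kronecker_one_mul P _⟩
  rw [hconj, trace_mul_cycle, hMM]
end
end

section
/- Let X and Y be positive definite complex n×n matrices, let ℓ ≥ 1, and let N₁, …, N_ℓ be Hermitian complex n×n matrices. If the block matrix [[X, N₁],[N₁, Y]] is positive semidefinite and, for every i ∈ {1, …, ℓ−1}, the block matrix [[X, N_{i+1}],[N_{i+1}, N_i]] is positive semidefinite, then N_i ≤ G_{2^{-i}}(X,Y) for every i ∈ {1, …, ℓ}. -/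
open Matrix Kronecker
open scoped ComplexOrder

noncomputable section

/-! The Schur complement turns `[[X, N], [N, W]] ≥ 0` into `N X⁻¹ N ≤ W`. Conjugating by
`X^{-1/2}`, the Hermitian matrix `M = X^{-1/2} N X^{-1/2}` satisfies `M² ≤ X^{-1/2} W X^{-1/2}`,
hence `M ≤ |M| ≤ (X^{-1/2} W X^{-1/2})^{1/2}` by operator monotonicity of the square root;
conjugating back gives `N ≤ G_{1/2}(X, W)`. Since `G_{1/2}(X, ·)` is monotone and
`G_{1/2}(X, G_t(X, Y)) = G_{t/2}(X, Y)`, induction along the chain gives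
`N_i ≤ G_{2^{-i}}(X, Y)`. -/

section CStarAlgebra

variable {A : Type*}

lemma IsSelfAdjoint.le_cfcAbs [NonUnitalCStarAlgebra A] [PartialOrder A] [StarOrderedRing A]
    {a : A} (ha : IsSelfAdjoint a) : a ≤ CFC.abs a := by
  rw [← sub_nonneg, CFC.abs_sub_self a ha]
  exact smul_nonneg zero_le_two (CFC.negPart_nonneg a)

lemma IsSelfAdjoint.le_sqrt_of_mul_self_le [NonUnitalCStarAlgebra A] [PartialOrder A]
    [StarOrderedRing A] {a b : A} (ha : IsSelfAdjoint a) (h : a * a ≤ b) : a ≤ CFC.sqrt b :=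
  calc a ≤ CFC.abs a := ha.le_cfcAbs
    _ = CFC.sqrt (a * a) := by rw [CFC.abs, ha.star_eq]
    _ ≤ CFC.sqrt b := CFC.sqrt_le_sqrt _ _ h

lemma CFC.rpow_neg_mul_conj_mul_rpow_neg [CStarAlgebra A] [PartialOrder A] [StarOrderedRing A]
    {a : A} (ha : IsStrictlyPositive a) (x : ℝ) (b : A) :
    a ^ (-x) * (a ^ x * b * a ^ x) * a ^ (-x) = b := by
  simp only [← mul_assoc, CFC.rpow_neg_mul_rpow x ha, one_mul]
  simp only [mul_assoc, CFC.rpow_mul_rpow_neg x ha, mul_one]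

end CStarAlgebra

lemma Matrix.PosSemidef.of_fromBlocks₂₂ {𝕜 m n : Type*} [RCLike 𝕜] {A : Matrix m m 𝕜}
    {B : Matrix m n 𝕜} {C : Matrix n m 𝕜} {D : Matrix n n 𝕜}
    (h : (fromBlocks A B C D).PosSemidef) : D.PosSemidef :=
  h.submatrix Sum.inr

section GeoMean

-- The L2 operator norm makes square complex matrices a C⋆-algebra, so that Mathlib's operator
-- monotonicity of `CFC.rpow` applies to them.
open scoped MatrixOrder Matrix.Norms.L2Operator

variable {m : Type*} [Fintype m] [DecidableEq m]

lemma mpow_eq_rpow {A : Matrix m m ℂ} (hA : 0 ≤ A) (t : ℝ) : mpow A t = A ^ t := by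
  rw [CFC.rpow_eq_cfc_real hA, hA.posSemidef.1.cfc_eq]
  simp only [mpow, matFun, dif_pos hA.posSemidef.1]
  rfl

lemma geoMean_eq_rpow {X Y : Matrix m m ℂ} (hX : 0 ≤ X) (hY : 0 ≤ Y) (t : ℝ) :
    geoMean t X Y =
      X ^ (1/2 : ℝ) * (X ^ (-(1/2) : ℝ) * Y * X ^ (-(1/2) : ℝ)) ^ t * X ^ (1/2 : ℝ) := by
  have hT : 0 ≤ X ^ (-(1/2) : ℝ) * Y * X ^ (-(1/2) : ℝ) :=
    conjugate_nonneg_of_nonneg hY CFC.rpow_nonneg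
  rw [geoMean, mpow_eq_rpow hX, mpow_eq_rpow hX, mpow_eq_rpow hT]

lemma geoMean_nonneg {X Y : Matrix m m ℂ} (hX : 0 ≤ X) (hY : 0 ≤ Y) (t : ℝ) :
    0 ≤ geoMean t X Y := by
  rw [geoMean_eq_rpow hX hY]
  exact conjugate_nonneg_of_nonneg CFC.rpow_nonneg CFC.rpow_nonneg

lemma geoMean_mono_right {X Y₁ Y₂ : Matrix m m ℂ} (hX : 0 ≤ X) (hY₁ : 0 ≤ Y₁) (h : Y₁ ≤ Y₂)
    {t : ℝ} (ht : t ∈ Set.Icc 0 1) : geoMean t X Y₁ ≤ geoMean t X Y₂ := by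
  rw [geoMean_eq_rpow hX hY₁, geoMean_eq_rpow hX (hY₁.trans h)]
  exact conjugate_le_conjugate_of_nonneg
    (CFC.rpow_le_rpow ht (conjugate_le_conjugate_of_nonneg h CFC.rpow_nonneg)) CFC.rpow_nonneg

lemma geoMean_geoMean {X Y : Matrix m m ℂ} (hX : X.PosDef) (hY : 0 ≤ Y) {s t : ℝ}
    (hs : 0 ≤ s) (ht : 0 ≤ t) : geoMean s X (geoMean t X Y) = geoMean (t * s) X Y := by
  have hX' := hX.isStrictlyPositive
  have hT : 0 ≤ X ^ (-(1/2) : ℝ) * Y * X ^ (-(1/2) : ℝ) :=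
    conjugate_nonneg_of_nonneg hY CFC.rpow_nonneg
  rw [geoMean_eq_rpow hX'.nonneg (geoMean_nonneg hX'.nonneg hY t), geoMean_eq_rpow hX'.nonneg hY,
    geoMean_eq_rpow hX'.nonneg hY, ← CFC.rpow_rpow_of_exponent_nonneg _ t s ht hs hT,
    CFC.rpow_neg_mul_conj_mul_rpow_neg hX']

lemma le_geoMean_half_of_fromBlocks_nonneg {X N W : Matrix m m ℂ} (hX : X.PosDef)
    (h : 0 ≤ fromBlocks X N N W) : N ≤ geoMean (1/2) X W := by
  have hX' := hX.isStrictlyPositive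
  have hN : N.IsHermitian := (isHermitian_fromBlocks_iff.mp h.posSemidef.1).2.1
  set p := X ^ (1/2 : ℝ)
  set r := X ^ (-(1/2) : ℝ)
  have hr : IsSelfAdjoint r := IsSelfAdjoint.of_nonneg CFC.rpow_nonneg
  have hinv : X⁻¹ = r * r := by
    rw [nonsing_inv_eq_ringInverse, CFC.inverse_eq_rpow_neg_one, ← CFC.rpow_add hX.isUnit]
    norm_num
  have hschur : N * X⁻¹ * N ≤ W := by
    have := hX.isUnit.invertible
    have := (PosDef.fromBlocks₁₁ N W hX).mp (by rw [hN.eq]; exact h.posSemidef)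
    rwa [hN.eq] at this
  have hM : r * N * r ≤ CFC.sqrt (r * W * r) := by
    refine (IsSelfAdjoint.conjugate_self hN hr).le_sqrt_of_mul_self_le ?_
    calc r * N * r * (r * N * r) = r * (N * X⁻¹ * N) * r := by simp only [hinv, mul_assoc]
      _ ≤ r * W * r := hr.conjugate_le_conjugate hschur
  calc N = p * (r * N * r) * p := by
        have := (CFC.rpow_neg_mul_conj_mul_rpow_neg hX' (-(1/2)) N).symm
        rwa [neg_neg] at this
    _ ≤ p * CFC.sqrt (r * W * r) * p :=
        (IsSelfAdjoint.of_nonneg CFC.rpow_nonneg).conjugate_le_conjugate hM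
    _ = geoMean (1/2) X W := by
        rw [geoMean_eq_rpow hX'.nonneg h.posSemidef.of_fromBlocks₂₂.nonneg,
          CFC.sqrt_eq_rpow]

end GeoMean

theorem geoMean_sdp_chain_general {n ℓ : ℕ}
    (X Y : Matrix (Fin n) (Fin n) ℂ) (hX : X.PosDef) (hY : Y.PosDef)
    (N : ℕ → Matrix (Fin n) (Fin n) ℂ)
    (h1 : (Matrix.fromBlocks X (N 1) (N 1) Y).PosSemidef)
    (hstep : ∀ i, 1 ≤ i → i + 1 ≤ ℓ →
      (Matrix.fromBlocks X (N (i + 1)) (N (i + 1)) (N i)).PosSemidef) :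
    ∀ i, 1 ≤ i → i ≤ ℓ → (geoMean ((2 : ℝ) ^ (-(i : ℤ))) X Y - N i).PosSemidef := by
  open scoped MatrixOrder in
  intro i hi hiℓ
  rw [← Matrix.le_iff]
  induction i, hi using Nat.le_induction with
  | base => simpa using le_geoMean_half_of_fromBlocks_nonneg hX h1.nonneg
  | succ i hi ih =>
    have hblock := hstep i hi hiℓ
    calc N (i + 1) ≤ geoMean (1/2) X (N i) :=
          le_geoMean_half_of_fromBlocks_nonneg hX hblock.nonneg
      _ ≤ geoMean (1/2) X (geoMean ((2 : ℝ) ^ (-(i : ℤ))) X Y) :=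
        geoMean_mono_right hX.posSemidef.nonneg hblock.of_fromBlocks₂₂.nonneg
          (ih (by omega)) ⟨by norm_num, by norm_num⟩
      _ = geoMean ((2 : ℝ) ^ (-((i + 1 : ℕ) : ℤ))) X Y := by
        rw [geoMean_geoMean hX hY.posSemidef.nonneg (by norm_num) (by positivity), Nat.cast_succ,
          neg_add, zpow_add₀ two_ne_zero]
        norm_num

/-- the chain of semidefinite constraints
`[[X, N₁],[N₁, Y]] ⪰ 0` and `[[X, N_{i+1}],[N_{i+1}, N_i]] ⪰ 0` for `1 ≤ i ≤ ℓ−1`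
implies `N_i ≤ G_{2^{-i}}(X,Y)` for all `1 ≤ i ≤ ℓ`. -/
theorem geoMean_sdp_chain {n ℓ : ℕ} (hℓ : 1 ≤ ℓ)
    (X Y : Matrix (Fin n) (Fin n) ℂ) (hX : X.PosDef) (hY : Y.PosDef)
    (N : ℕ → Matrix (Fin n) (Fin n) ℂ)
    (hHerm : ∀ i, 1 ≤ i → i ≤ ℓ → (N i).IsHermitian)
    (h1 : (Matrix.fromBlocks X (N 1) (N 1) Y).PosSemidef)
    (hstep : ∀ i, 1 ≤ i → i + 1 ≤ ℓ →
      (Matrix.fromBlocks X (N (i + 1)) (N (i + 1)) (N i)).PosSemidef) :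
    ∀ i, 1 ≤ i → i ≤ ℓ → (geoMean ((2 : ℝ) ^ (-(i : ℤ))) X Y - N i).PosSemidef :=
  geoMean_sdp_chain_general X Y hX hY N h1 hstep
end
end

section
/- Let z > 0, t ∈ [0,1], and τ be real numbers. Then (z−1)/(t·(z−1)+1) ≥ τ if and only if the real symmetric 2×2 matrix !![z−1−τ, −√t·τ; −√t·τ, 1−t·τ] is positive semidefinite. (Note that t·(z−1)+1 > 0 under the stated hypotheses.) -/
/-!
With `d = t(z−1)+1 > 0`, the determinant of the matrix is `(z−1) − τ d = d · (f_t(z) − τ)`.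
A symmetric real 2×2 matrix is positive semidefinite iff its diagonal entries and its
determinant are nonnegative, and here `(z−1) ≥ τ d` already forces both diagonal entries
to be nonnegative.
-/

open Matrix in
theorem Matrix.posSemidef_fin_two_iff {a b c : ℝ} :
    (!![a, b; b, c]).PosSemidef ↔ 0 ≤ a ∧ 0 ≤ c ∧ b * b ≤ a * c := by
  constructor
  · intro h
    have hdet := h.det_nonneg
    rw [det_fin_two_of] at hdet
    exact ⟨h.diag_nonneg (i := 0), h.diag_nonneg (i := 1), by linarith⟩
  · rintro ⟨ha, hc, hdet⟩
    refine PosSemidef.of_dotProduct_mulVec_nonneg ?_ fun x => ?_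
    · ext i j
      fin_cases i <;> fin_cases j <;> rfl
    · have hq : star x ⬝ᵥ (!![a, b; b, c] *ᵥ x) = a * x 0 ^ 2 + 2 * b * x 0 * x 1 + c * x 1 ^ 2 := by
        simp only [star_trivial, dotProduct, mulVec, Fin.sum_univ_two, of_apply, cons_val',
          cons_val_zero, cons_val_one, empty_val', cons_val_fin_one]
        ring
      rw [hq]
      -- `a · q(x) = (a x₀ + b x₁)² + (ac − b²) x₁²`, and `b = 0` when `a = 0`
      rcases ha.eq_or_lt with rfl | ha
      · obtain rfl : b = 0 := by nlinarith
        nlinarith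
      · refine nonneg_of_mul_nonneg_right ?_ ha
        nlinarith [sq_nonneg (a * x 0 + b * x 1), mul_nonneg (sub_nonneg.2 hdet) (sq_nonneg (x 1))]

/-- scalar semidefinite representation of `f_t(z) = (z−1)/(t(z−1)+1)`:
`f_t(z) ≥ τ` iff `!![z−1−τ, −√t·τ; −√t·τ, 1−t·τ]` is positive semidefinite. -/
theorem scalar_ft_sdp_iff (z t τ : ℝ) (hz : 0 < z) (ht : t ∈ Set.Icc (0 : ℝ) 1) :
    (z - 1) / (t * (z - 1) + 1) ≥ τ ↔
      (!![z - 1 - τ, -(Real.sqrt t * τ); -(Real.sqrt t * τ), 1 - t * τ]).PosSemidef := by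
  obtain ⟨ht0, ht1⟩ := ht
  set d := t * (z - 1) + 1
  have hd : 0 < d := by nlinarith [mul_nonneg ht0 hz.le]
  have hdet : (z - 1 - τ) * (1 - t * τ) - -(√t * τ) * -(√t * τ) = (z - 1) - τ * d := by
    have := Real.mul_self_sqrt ht0
    linear_combination -τ ^ 2 * this
  rw [ge_iff_le, le_div_iff₀ hd, Matrix.posSemidef_fin_two_iff]
  constructor
  · intro h
    refine ⟨?_, ?_, by linarith⟩
    · -- `(z - 1 - τ) d ≥ (z - 1) d - (z - 1) = t (z - 1)²`
      nlinarith [mul_nonneg ht0 (sq_nonneg (z - 1))]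
    · -- `(1 - t τ) d ≥ d - t (z - 1) = 1`
      nlinarith [mul_le_mul_of_nonneg_left h ht0]
  · rintro ⟨-, -, h⟩
    linarith
end

section
/- Let Z be a positive definite complex n×n matrix, let t ∈ [0,1], and let T be a Hermitian complex n×n matrix. Define f_t(Z) := (Z − I)·(t·(Z − I) + I)^{-1} (the matrix t·(Z−I)+I is invertible since Z is positive definite and t ∈ [0,1], and f_t(Z) is Hermitian). Then f_t(Z) ≥ T if and only if the block matrix [[Z − I − T, −√t·T],[−√t·T, I − t·T]] is positive semidefinite. -/
/-!
Put `A = Z - 1`, `s = √t` and `M = s²A + 1 = tZ + (1 - t)I`, which is positive definite. The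
congruence by the shear `[[I, -sI], [0, I]]` turns the block matrix into
`[[A - T, -sA], [-sA, M]]`, whose Schur complement with respect to `M` is
`A - T - s²AM⁻¹A = AM⁻¹ - T`, since `A = AM⁻¹M = AM⁻¹ + s²AM⁻¹A`.
-/

open Matrix
open scoped ComplexOrder

namespace Matrix

variable {ι R 𝕜 : Type*} [DecidableEq ι] [RCLike 𝕜]

theorem PosDef.smul_sub_one_add_one {Z : Matrix ι ι 𝕜} (hZ : Z.PosDef) {t : ℝ}
    (ht : t ∈ Set.Icc 0 1) : ((t : 𝕜) • (Z - 1) + 1).PosDef := by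
  obtain rfl | ht₀ := ht.1.eq_or_lt
  · simpa using PosDef.one
  have hsplit : (t : 𝕜) • (Z - 1) + 1 = (t : 𝕜) • Z + (1 - (t : 𝕜)) • 1 := by module
  rw [hsplit]
  refine (hZ.smul (RCLike.ofReal_pos.mpr ht₀)).add_posSemidef (PosSemidef.one.smul ?_)
  rw [sub_nonneg, ← RCLike.ofReal_one, RCLike.ofReal_le_ofReal]
  exact ht.2

variable [Fintype ι]

theorem sub_smul_mul_inv_mul_eq_mul_inv [CommRing R] (A : Matrix ι ι R) (c : R)
    (h : IsUnit (c • A + 1).det) :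
    A - c • (A * (c • A + 1)⁻¹ * A) = A * (c • A + 1)⁻¹ := by
  have hA : A = c • (A * (c • A + 1)⁻¹ * A) + A * (c • A + 1)⁻¹ := calc
    A = A * (c • A + 1)⁻¹ * (c • A + 1) := (nonsing_inv_mul_cancel_right _ A h).symm
    _ = c • (A * (c • A + 1)⁻¹ * A) + A * (c • A + 1)⁻¹ := by
      rw [Matrix.mul_add, Matrix.mul_one, Matrix.mul_smul]
  exact sub_eq_iff_eq_add'.mpr hA

theorem posSemidef_fromBlocks_shear_iff (A T : Matrix ι ι 𝕜) {s : 𝕜} (hs : IsSelfAdjoint s) :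
    (fromBlocks (A - T) (-(s • T)) (-(s • T)) (1 - s ^ 2 • T)).PosSemidef ↔
      (fromBlocks (A - T) (-(s • A)) (-(s • A)) (s ^ 2 • A + 1)).PosSemidef := by
  set U : Matrix (ι ⊕ ι) (ι ⊕ ι) 𝕜 := fromBlocks 1 (-(s • 1)) 0 1
  have hU : IsUnit U := by
    rw [isUnit_iff_isUnit_det, det_fromBlocks_zero₂₁]; simp
  rw [← hU.posSemidef_star_left_conjugate_iff]
  congr! 1
  simp only [U, star_eq_conjTranspose, fromBlocks_conjTranspose, fromBlocks_multiply,
    conjTranspose_neg, conjTranspose_smul, conjTranspose_one, conjTranspose_zero, hs.star_eq]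
  congr 1 <;> simp only [Matrix.one_mul, Matrix.mul_one, Matrix.zero_mul, Matrix.mul_zero,
    Matrix.neg_mul, Matrix.mul_neg, smul_mul_assoc, Matrix.mul_smul] <;> module

theorem posSemidef_fromBlocks_iff_mul_inv_sub {A : Matrix ι ι 𝕜} (hA : A.IsHermitian)
    (T : Matrix ι ι 𝕜) {s : 𝕜} (hs : IsSelfAdjoint s) (hM : (s ^ 2 • A + 1).PosDef) :
    (fromBlocks (A - T) (-(s • A)) (-(s • A)) (s ^ 2 • A + 1)).PosSemidef ↔
      (A * (s ^ 2 • A + 1)⁻¹ - T).PosSemidef := by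
  have : Invertible (s ^ 2 • A + 1) := hM.isUnit.invertible
  have hB : (-(s • A))ᴴ = -(s • A) := by
    rw [conjTranspose_neg, conjTranspose_smul, hA.eq, hs.star_eq]
  have hSchur := PosDef.fromBlocks₂₂ (A - T) (-(s • A)) hM
  rw [hB] at hSchur
  rw [hSchur, ← sub_smul_mul_inv_mul_eq_mul_inv A _ ((isUnit_iff_isUnit_det _).mp hM.isUnit)]
  congr! 1
  simp only [Matrix.neg_mul, Matrix.mul_neg, smul_mul_assoc, Matrix.mul_smul]
  module

end Matrix

theorem matrix_ft_sdp_iff_general {n : ℕ}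
    (Z : Matrix (Fin n) (Fin n) ℂ) (hZ : Z.PosDef)
    (t : ℝ) (ht : t ∈ Set.Icc (0 : ℝ) 1)
    (T : Matrix (Fin n) (Fin n) ℂ) :
    ((Z - 1) * ((t : ℂ) • (Z - 1) + 1)⁻¹ - T).PosSemidef ↔
      (Matrix.fromBlocks (Z - 1 - T) (-((Real.sqrt t : ℂ) • T))
        (-((Real.sqrt t : ℂ) • T)) (1 - (t : ℂ) • T)).PosSemidef := by
  have hM : ((t : ℂ) • (Z - 1) + 1).PosDef := hZ.smul_sub_one_add_one ht
  have ht_sq : (t : ℂ) = (Real.sqrt t : ℂ) ^ 2 := by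
    rw [← Complex.ofReal_pow, Real.sq_sqrt ht.1]
  rw [ht_sq] at hM ⊢
  have hs : IsSelfAdjoint (Real.sqrt t : ℂ) := Complex.conj_ofReal _
  exact ((posSemidef_fromBlocks_shear_iff _ T hs).trans
    (posSemidef_fromBlocks_iff_mul_inv_sub (hZ.isHermitian.sub isHermitian_one) T hs hM)).symm

/-- matrix semidefinite representation of `f_t(Z) = (Z−I)(t(Z−I)+I)⁻¹`:
for positive definite `Z`, `t ∈ [0,1]`, and Hermitian `T`, `f_t(Z) ≥ T` iff the block matrix
`[[Z − I − T, −√t·T],[−√t·T, I − t·T]]` is positive semidefinite. -/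
theorem matrix_ft_sdp_iff {n : ℕ}
    (Z : Matrix (Fin n) (Fin n) ℂ) (hZ : Z.PosDef)
    (t : ℝ) (ht : t ∈ Set.Icc (0 : ℝ) 1)
    (T : Matrix (Fin n) (Fin n) ℂ) (hT : T.IsHermitian) :
    ((Z - 1) * ((t : ℂ) • (Z - 1) + 1)⁻¹ - T).PosSemidef ↔
      (Matrix.fromBlocks (Z - 1 - T) (-((Real.sqrt t : ℂ) • T))
        (-((Real.sqrt t : ℂ) • T)) (1 - (t : ℂ) • T)).PosSemidef :=
  matrix_ft_sdp_iff_general Z hZ t ht T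
end
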